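/- arXiv:2312.02676 — 3 statements merged into one kernel-verified Lean document; each statement's English description precedes it below -/
import Mathlib

section
/- There exists a relation ⊵ on a graded vector space V over ℤ/2 (concentrated in degree 0, with V_0 = (ℤ/2)^3) that satisfies all four properties of a bilinear relation (v ⊵ w whenever v = 0 or w = 0; scalar stability; additivity in each argument for elements of equal degree) but is not bilinear, i.e., there is no vector subspace R ⊆ V_0 ⊗ V_0 with v ⊵ w iff v ⊗ w ∈ R. -/
/-!
Bilinearity forces `v ⊗ w ∈ R` to be closed under sums of tensors of related pairs, not merely
under sums taken in one argument at a time. Over any commutative semiring, the five tensors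
`x ⊗ (y + z)`, `y ⊗ y`, `z ⊗ (x + y)`, `(x + y) ⊗ x`, `(y + z) ⊗ z` add up to
`(x + y + z) ⊗ (x + y + z)`. Relating exactly these five pairs of `(ℤ/2)³` (plus the pairs
involving `0`) gives a relation whose closure properties are checked by finite enumeration, while
`x + y + z` is not related to itself.
-/

open TensorProduct

def IsBilinearRel (R : Type*) {M N : Type*} [CommSemiring R] [AddCommMonoid M] [Module R M]
    [AddCommMonoid N] [Module R N] (r : M → N → Prop) : Prop :=
  ∃ S : Submodule R (M ⊗[R] N), ∀ v w, r v w ↔ v ⊗ₜ[R] w ∈ S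

section NotBilinear

variable {R M : Type*} [CommSemiring R] [AddCommMonoid M] [Module R M]

theorem add_add_tmul_add_add (x y z : M) :
    (x + y + z) ⊗ₜ[R] (x + y + z) =
      x ⊗ₜ (y + z) + y ⊗ₜ y + z ⊗ₜ (x + y) + (x + y) ⊗ₜ x + (y + z) ⊗ₜ z := by
  simp only [add_tmul, tmul_add]
  abel

theorem not_isBilinearRel_of_five_pairs {r : M → M → Prop} {x y z : M}
    (h₁ : r x (y + z)) (h₂ : r y y) (h₃ : r z (x + y)) (h₄ : r (x + y) x) (h₅ : r (y + z) z)
    (hxyz : ¬ r (x + y + z) (x + y + z)) : ¬ IsBilinearRel R r := by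
  rintro ⟨S, hS⟩
  refine hxyz ((hS _ _).2 ?_)
  rw [add_add_tmul_add_add]
  exact S.add_mem (S.add_mem (S.add_mem (S.add_mem ((hS _ _).1 h₁) ((hS _ _).1 h₂))
    ((hS _ _).1 h₃)) ((hS _ _).1 h₄)) ((hS _ _).1 h₅)

end NotBilinear

def exoticRel (v w : Fin 3 → ZMod 2) : Prop :=
  v = 0 ∨ w = 0 ∨
  (v = ![1, 0, 0] ∧ w = ![0, 1, 1]) ∨
  (v = ![0, 1, 0] ∧ w = ![0, 1, 0]) ∨
  (v = ![0, 0, 1] ∧ w = ![1, 1, 0]) ∨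
  (v = ![1, 1, 0] ∧ w = ![1, 0, 0]) ∨
  (v = ![0, 1, 1] ∧ w = ![0, 0, 1])

instance : DecidableRel exoticRel := fun _ _ => by
  unfold exoticRel; infer_instance

theorem exoticRel_smul (v w : Fin 3 → ZMod 2) (a b : ZMod 2) (h : exoticRel v w) :
    exoticRel (a • v) (b • w) := by
  revert v w a b; decide

theorem exoticRel_add_left (v v' w : Fin 3 → ZMod 2) (h : exoticRel v w) (h' : exoticRel v' w) :
    exoticRel (v + v') w := by
  revert v v' w; decide

theorem exoticRel_add_right (v w w' : Fin 3 → ZMod 2) (h : exoticRel v w) (h' : exoticRel v w') :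
    exoticRel v (w + w') := by
  revert v w w'; decide

theorem not_isBilinearRel_exoticRel : ¬ IsBilinearRel (ZMod 2) exoticRel :=
  not_isBilinearRel_of_five_pairs (x := ![1, 0, 0]) (y := ![0, 1, 0]) (z := ![0, 0, 1])
    (by decide) (by decide) (by decide) (by decide) (by decide) (by decide)

/-- There is a relation on the vector space `(ℤ/2)³` (viewed as a graded vector space
concentrated in degree `0`) that satisfies the four closure properties of a bilinear
relation but is not bilinear, i.e., it is not defined by membership of `v ⊗ w` in a
vector subspace of `V ⊗ V`. -/
theorem stmt4 :
    ∃ r : (Fin 3 → ZMod 2) → (Fin 3 → ZMod 2) → Prop,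
      (∀ v w : Fin 3 → ZMod 2, v = 0 ∨ w = 0 → r v w) ∧
      (∀ (v w : Fin 3 → ZMod 2) (a b : ZMod 2), r v w → r (a • v) (b • w)) ∧
      (∀ v v' w : Fin 3 → ZMod 2, r v w → r v' w → r (v + v') w) ∧
      (∀ v w w' : Fin 3 → ZMod 2, r v w → r v w' → r v (w + w')) ∧
      ¬ ∃ R : Submodule (ZMod 2) ((Fin 3 → ZMod 2) ⊗[ZMod 2] (Fin 3 → ZMod 2)),
          ∀ v w : Fin 3 → ZMod 2, r v w ↔ v ⊗ₜ[ZMod 2] w ∈ R :=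
  ⟨exoticRel, fun _ _ h => h.imp_right Or.inl, exoticRel_smul, exoticRel_add_left,
    exoticRel_add_right, not_isBilinearRel_exoticRel⟩
end

section
/- Let V and W be directional graded vector spaces whose pointing relations ⊵_V and ⊵_W are generated by relations ↗_V and ↗_W respectively. Then the smallest defining vector space for the pointing relation of the tensor product V ⊗ W equals the span of { v ⊗ w ⊗ v' ⊗ w' : v ↗_V v', w ↗_W w' }. -/
open TensorProduct DirectSum

namespace Hd

section GVS

variable (K : Type) [Field K] (V : ℤ → Type) [∀ i, AddCommGroup (V i)] [∀ i, Module K (V i)]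

/-- The total space of a graded vector space. -/
abbrev Tot : Type := ⨁ i, V i

/-- A homogeneous element of a graded vector space, viewed in the total space. -/
noncomputable def emb (x : Σ i, V i) : Tot V :=
  DirectSum.lof K ℤ V x.1 x.2

/-- The tensor product `V ⊗ V` (as a total space). -/
abbrev TT : Type := Tot V ⊗[K] Tot V

/-- The degree `n` part of `V ⊗ V`. -/
noncomputable def homTensor (n : ℤ) : Submodule K (TT K V) :=
  Submodule.span K {z | ∃ x y : Σ i, V i, x.1 + y.1 = n ∧ z = emb K V x ⊗ₜ[K] emb K V y}

/-- A graded vector subspace of `V ⊗ V`: it is the sum of its homogeneous parts. -/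
def IsGradedSub (R : Submodule K (TT K V)) : Prop :=
  R = ⨆ n : ℤ, R ⊓ homTensor K V n

/-- `R` is a defining vector space for the relation `r`. -/
def IsDefining (r : (Σ i, V i) → (Σ i, V i) → Prop) (R : Submodule K (TT K V)) : Prop :=
  IsGradedSub K V R ∧ ∀ v w : Σ i, V i, r v w ↔ emb K V v ⊗ₜ[K] emb K V w ∈ R

/-- A relation on the homogeneous elements of `V` is bilinear if it has a defining
graded vector subspace of `V ⊗ V`. -/
def IsBilinear (r : (Σ i, V i) → (Σ i, V i) → Prop) : Prop :=
  ∃ R : Submodule K (TT K V), IsDefining K V r R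

/-- The bilinear relation generated by `r`: the intersection of all bilinear relations
containing `r`. -/
def gen (r : (Σ i, V i) → (Σ i, V i) → Prop) : (Σ i, V i) → (Σ i, V i) → Prop :=
  fun v w => ∀ s : (Σ i, V i) → (Σ i, V i) → Prop,
    IsBilinear K V s → (∀ a b, r a b → s a b) → s v w

/-- The smallest defining vector space of a bilinear relation: the intersection of all
defining vector spaces. -/
noncomputable def minDef (r : (Σ i, V i) → (Σ i, V i) → Prop) : Submodule K (TT K V) :=
  sInf {R | IsDefining K V r R}

end GVS

end Hd

namespace Hd

section TP

variable (K : Type) [Field K] (V W : ℤ → Type)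
  [∀ i, AddCommGroup (V i)] [∀ i, Module K (V i)]
  [∀ i, AddCommGroup (W i)] [∀ i, Module K (W i)]

/-- The tensor product of two graded vector spaces:
`(V ⊗ W) n = ⨁_{p + q = n} V p ⊗ W q`. -/
abbrev TP (n : ℤ) : Type :=
  ⨁ p : {p : ℤ × ℤ // p.1 + p.2 = n}, V p.1.1 ⊗[K] W p.1.2

/-- The canonical identification of the total space of `V ⊗ W` with
`Tot V ⊗ Tot W`. -/
noncomputable def psi : Tot (TP K V W) →ₗ[K] Tot V ⊗[K] Tot W :=
  DirectSum.toModule K ℤ _ fun _ => DirectSum.toModule K _ _ fun p =>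
    TensorProduct.map (DirectSum.lof K ℤ V p.1.1) (DirectSum.lof K ℤ W p.1.2)

/-- The identification of `(V ⊗ W) ⊗ (V ⊗ W)` with
`(Tot V ⊗ Tot W) ⊗ (Tot V ⊗ Tot W)`. -/
noncomputable def Phi :
    TT K (TP K V W) →ₗ[K] (Tot V ⊗[K] Tot W) ⊗[K] (Tot V ⊗[K] Tot W) :=
  TensorProduct.map (psi K V W) (psi K V W)

/-- The defining subspace of the pointing relation of the tensor product of two
directional graded vector spaces: the span of the elements `v ⊗ w ⊗ v' ⊗ w'` with
`relV v v'` and `relW w w'`. -/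
noncomputable def bigR (relV : (Σ i, V i) → (Σ i, V i) → Prop)
    (relW : (Σ i, W i) → (Σ i, W i) → Prop) :
    Submodule K ((Tot V ⊗[K] Tot W) ⊗[K] (Tot V ⊗[K] Tot W)) :=
  Submodule.span K {z | ∃ (v v' : Σ i, V i) (w w' : Σ i, W i), relV v v' ∧ relW w w' ∧
    z = (emb K V v ⊗ₜ[K] emb K W w) ⊗ₜ[K] (emb K V v' ⊗ₜ[K] emb K W w')}

/-- The pointing relation of the tensor product of two directional graded vector
spaces. -/
def tpRel (relV : (Σ i, V i) → (Σ i, V i) → Prop)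
    (relW : (Σ i, W i) → (Σ i, W i) → Prop) (θ θ' : Σ n, TP K V W n) : Prop :=
  Phi K V W (emb K (TP K V W) θ ⊗ₜ[K] emb K (TP K V W) θ') ∈ bigR K V W relV relW

end TP

end Hd


namespace HdAux

open Hd TensorProduct

section One

variable (K : Type) [Field K] (V : ℤ → Type) [∀ i, AddCommGroup (V i)] [∀ i, Module K (V i)]

lemma graded_span (s : Set (TT K V)) (hs : ∀ z ∈ s, ∃ n, z ∈ homTensor K V n) :
    IsGradedSub K V (Submodule.span K s) :=
  le_antisymm (Submodule.span_le.2 fun z hz => by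
      obtain ⟨n, hn⟩ := hs z hz
      exact Submodule.mem_iSup_of_mem n ⟨Submodule.subset_span hz, hn⟩)
    (iSup_le fun _ => inf_le_left)

lemma emb_tmul_mem_hom (v w : Σ i, V i) :
    emb K V v ⊗ₜ[K] emb K V w ∈ homTensor K V (v.1 + w.1) :=
  Submodule.subset_span ⟨v, w, rfl, rfl⟩

/-- The span of the tensors of pairs related by `r`. -/
noncomputable def relSpan (r : (Σ i, V i) → (Σ i, V i) → Prop) : Submodule K (TT K V) :=
  Submodule.span K {z | ∃ a b, r a b ∧ z = emb K V a ⊗ₜ[K] emb K V b}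

lemma relSpan_graded (r : (Σ i, V i) → (Σ i, V i) → Prop) :
    IsGradedSub K V (relSpan K V r) := by
  refine graded_span K V _ ?_
  rintro z ⟨a, b, hab, rfl⟩
  exact ⟨a.1 + b.1, emb_tmul_mem_hom K V a b⟩

lemma gen_iff (r : (Σ i, V i) → (Σ i, V i) → Prop) (v w : Σ i, V i) :
    gen K V r v w ↔ emb K V v ⊗ₜ[K] emb K V w ∈ relSpan K V r := by
  constructor
  · intro h
    exact h _ ⟨relSpan K V r, relSpan_graded K V r, fun _ _ => Iff.rfl⟩
      (fun a b hab => Submodule.subset_span ⟨a, b, hab, rfl⟩)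
  · rintro h s ⟨R, hRg, hR⟩ hrs
    refine (hR v w).2 (Submodule.span_le.2 ?_ h)
    rintro z ⟨a, b, hab, rfl⟩
    exact (hR a b).1 (hrs a b hab)

lemma gen_of (r : (Σ i, V i) → (Σ i, V i) → Prop) {v w : Σ i, V i} (h : r v w) :
    gen K V r v w := fun _ _ hs => hs v w h

lemma minDef_eq_relSpan (r : (Σ i, V i) → (Σ i, V i) → Prop)
    (h : ∀ v w, emb K V v ⊗ₜ[K] emb K V w ∈ relSpan K V r → r v w) :
    minDef K V r = relSpan K V r := by
  have hdef : IsDefining K V r (relSpan K V r) :=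
    ⟨relSpan_graded K V r, fun v w =>
      ⟨fun hr => Submodule.subset_span ⟨v, w, hr, rfl⟩, h v w⟩⟩
  refine le_antisymm (sInf_le hdef) (le_sInf fun R hR => Submodule.span_le.2 ?_)
  rintro z ⟨a, b, hab, rfl⟩
  exact (hR.2 a b).1 hab

end One

section Two

variable (K : Type) [Field K] (V W : ℤ → Type)
  [∀ i, AddCommGroup (V i)] [∀ i, Module K (V i)]
  [∀ i, AddCommGroup (W i)] [∀ i, Module K (W i)]
  (rV : (Σ i, V i) → (Σ i, V i) → Prop) (rW : (Σ i, W i) → (Σ i, W i) → Prop)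

lemma key_tmul : ∀ x ∈ relSpan K V rV, ∀ y ∈ relSpan K W rW,
    tensorTensorTensorComm K (Tot V) (Tot V) (Tot W) (Tot W) (x ⊗ₜ[K] y) ∈
      bigR K V W rV rW := by
  intro x hx
  induction hx using Submodule.span_induction with
  | mem x hx =>
    intro y hy
    induction hy using Submodule.span_induction with
    | mem y hy =>
      obtain ⟨a, b, hab, rfl⟩ := hx
      obtain ⟨c, d, hcd, rfl⟩ := hy
      rw [tensorTensorTensorComm_tmul]
      exact Submodule.subset_span ⟨a, b, c, d, hab, hcd, rfl⟩
    | zero => rw [tmul_zero, map_zero]; exact zero_mem _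
    | add y z _ _ hy hz => rw [tmul_add, map_add]; exact add_mem hy hz
    | smul c y _ hy =>
      rw [tmul_smul, LinearEquiv.map_smul]; exact Submodule.smul_mem _ c hy
  | zero => intro y hy; rw [zero_tmul, map_zero]; exact zero_mem _
  | add x z _ _ hx hz =>
    intro y hy; rw [add_tmul, map_add]; exact add_mem (hx y hy) (hz y hy)
  | smul c x _ hx =>
    intro y hy; rw [← smul_tmul', LinearEquiv.map_smul]
    exact Submodule.smul_mem _ c (hx y hy)

lemma bigR_gen_le :
    bigR K V W (gen K V rV) (gen K W rW) ≤ bigR K V W rV rW := by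
  refine Submodule.span_le.2 ?_
  rintro z ⟨v, v', w, w', hv, hw, rfl⟩
  have hv' := (gen_iff K V rV v v').1 hv
  have hw' := (gen_iff K W rW w w').1 hw
  have := key_tmul K V W rV rW _ hv' _ hw'
  rwa [tensorTensorTensorComm_tmul] at this

lemma phi_relSpan_le :
    Submodule.map (Phi K V W)
        (relSpan K (TP K V W) (tpRel K V W (gen K V rV) (gen K W rW))) ≤
      bigR K V W (gen K V rV) (gen K W rW) := by
  rw [relSpan, Submodule.map_span, Submodule.span_le]
  rintro _ ⟨z, ⟨a, b, hab, rfl⟩, rfl⟩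
  exact hab

lemma tpRel_of_mem_relSpan (θ θ' : Σ n, TP K V W n)
    (h : emb K (TP K V W) θ ⊗ₜ[K] emb K (TP K V W) θ' ∈
      relSpan K (TP K V W) (tpRel K V W (gen K V rV) (gen K W rW))) :
    tpRel K V W (gen K V rV) (gen K W rW) θ θ' := by
  have := phi_relSpan_le K V W rV rW ⟨_, h, rfl⟩
  exact this

/-- The element of `TP` corresponding to `v ⊗ w`. -/
noncomputable def mkTP (v : Σ i, V i) (w : Σ i, W i) : Σ n, TP K V W n :=
  ⟨v.1 + w.1, DirectSum.lof K {p : ℤ × ℤ // p.1 + p.2 = v.1 + w.1}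
    (fun p => V p.1.1 ⊗[K] W p.1.2) ⟨(v.1, w.1), rfl⟩ (v.2 ⊗ₜ[K] w.2)⟩

lemma psi_mkTP (v : Σ i, V i) (w : Σ i, W i) :
    psi K V W (emb K (TP K V W) (mkTP K V W v w)) = emb K V v ⊗ₜ[K] emb K W w := by
  simp only [psi, emb, mkTP]
  erw [DirectSum.toModule_lof, DirectSum.toModule_lof, TensorProduct.map_tmul]

end Two

end HdAux

open TensorProduct in
theorem stmt10 (K : Type) [Field K] (V W : ℤ → Type)
    [∀ i, AddCommGroup (V i)] [∀ i, Module K (V i)]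
    [∀ i, AddCommGroup (W i)] [∀ i, Module K (W i)]
    (rV : (Σ i, V i) → (Σ i, V i) → Prop) (rW : (Σ i, W i) → (Σ i, W i) → Prop) :
    Submodule.map (Hd.Phi K V W)
        (Hd.minDef K (Hd.TP K V W) (Hd.tpRel K V W (Hd.gen K V rV) (Hd.gen K W rW)))
      = Submodule.span K
          {z | ∃ (v v' : Σ i, V i) (w w' : Σ i, W i), rV v v' ∧ rW w w' ∧
            z = (Hd.emb K V v ⊗ₜ[K] Hd.emb K W w) ⊗ₜ[K]
              (Hd.emb K V v' ⊗ₜ[K] Hd.emb K W w')} := by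
  have hmin := HdAux.minDef_eq_relSpan K (Hd.TP K V W)
    (Hd.tpRel K V W (Hd.gen K V rV) (Hd.gen K W rW))
    (HdAux.tpRel_of_mem_relSpan K V W rV rW)
  rw [hmin]
  show _ = Hd.bigR K V W rV rW
  refine le_antisymm ((HdAux.phi_relSpan_le K V W rV rW).trans
    (HdAux.bigR_gen_le K V W rV rW)) ?_
  refine Submodule.span_le.2 ?_
  rintro z ⟨v, v', w, w', hv, hw, rfl⟩
  refine ⟨Hd.emb K (Hd.TP K V W) (HdAux.mkTP K V W v w) ⊗ₜ[K]
    Hd.emb K (Hd.TP K V W) (HdAux.mkTP K V W v' w'), ?_, ?_⟩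
  · refine Submodule.subset_span ⟨HdAux.mkTP K V W v w, HdAux.mkTP K V W v' w', ?_, rfl⟩
    show Hd.Phi K V W _ ∈ _
    rw [Hd.Phi, TensorProduct.map_tmul, HdAux.psi_mkTP, HdAux.psi_mkTP]
    exact Submodule.subset_span ⟨v, v', w, w',
      HdAux.gen_of K V rV hv, HdAux.gen_of K W rW hw, rfl⟩
  · rw [Hd.Phi, TensorProduct.map_tmul, HdAux.psi_mkTP, HdAux.psi_mkTP]
end

section
/- Let (X, A) be a pair of preordered spaces. The connecting homomorphisms δ_* : H_k(X, A) → H_{k−1}(A) of the long exact homology sequence constitute a morphism of directional graded vector spaces: if α ↗_{X,A} β then δ_*(α) ↗_A δ_*(β), and hence δ_* preserves the generated bilinear pointing relations. -/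
open TensorProduct DirectSum

namespace Hm

open Hd

/-- The subspace topology. -/
abbrev subTop (X : Type) (tX : TopologicalSpace X) (A : Set X) : TopologicalSpace ↥A :=
  @instTopologicalSpaceSubtype X (· ∈ A) tX

/-- The product topology. -/
abbrev prodTop (X Y : Type) (tX : TopologicalSpace X) (tY : TopologicalSpace Y) :
    TopologicalSpace (X × Y) :=
  @instTopologicalSpaceProd X Y tX tY

/-- An abstract (singular) homology theory with coefficients in a field `K`:
functorial homology of pairs of spaces, connecting homomorphisms, homology cross
products, and the dimension and path-connectedness properties of singular homology. -/
structure HomologyTheory (K : Type) [Field K] where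
  /-- The homology of a pair `(X, A)` in degree `n`. -/
  H : (n : ℤ) → (X : Type) → TopologicalSpace X → Set X → ModuleCat.{0} K
  /-- The homomorphism induced by a continuous map of pairs. -/
  map : ∀ (n : ℤ) {X Y : Type} (tX : TopologicalSpace X) (tY : TopologicalSpace Y)
    (A : Set X) (B : Set Y) (f : X → Y), @Continuous X Y tX tY f → Set.MapsTo f A B →
    (↥(H n X tX A) →ₗ[K] ↥(H n Y tY B))
  map_id : ∀ (n : ℤ) {X : Type} (tX : TopologicalSpace X) (A : Set X),
    map n tX tX A A id (@continuous_id X tX) (Set.mapsTo_id A) = LinearMap.id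
  map_comp : ∀ (n : ℤ) {X Y Z : Type} (tX : TopologicalSpace X) (tY : TopologicalSpace Y)
    (tZ : TopologicalSpace Z) (A : Set X) (B : Set Y) (C : Set Z) (f : X → Y) (g : Y → Z)
    (hf : @Continuous X Y tX tY f) (hg : @Continuous Y Z tY tZ g)
    (hA : Set.MapsTo f A B) (hB : Set.MapsTo g B C),
    (map n tY tZ B C g hg hB).comp (map n tX tY A B f hf hA)
      = map n tX tZ A C (g ∘ f) (hg.comp hf) (hB.comp hA)
  /-- The connecting homomorphism `H n (X, A) → H (n-1) A` of the pair `(X, A)`. -/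
  delta : ∀ (n : ℤ) {X : Type} (tX : TopologicalSpace X) (A : Set X),
    ↥(H n X tX A) →ₗ[K] ↥(H (n - 1) ↥A (subTop X tX A) (∅ : Set ↥A))
  delta_nat : ∀ (n : ℤ) {X Y : Type} (tX : TopologicalSpace X) (tY : TopologicalSpace Y)
    (A : Set X) (B : Set Y) (f : X → Y) (hf : @Continuous X Y tX tY f)
    (hAB : Set.MapsTo f A B)
    (hres : @Continuous ↥A ↥B (subTop X tX A) (subTop Y tY B) (hAB.restrict f A B)),
    (delta n tY B).comp (map n tX tY A B f hf hAB)
      = (map (n - 1) (subTop X tX A) (subTop Y tY B) ∅ ∅ (hAB.restrict f A B) hres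
          (Set.mapsTo_empty _ _)).comp (delta n tX A)
  /-- The homology cross product. -/
  cross : ∀ (p q : ℤ) {X Y : Type} (tX : TopologicalSpace X) (tY : TopologicalSpace Y),
    ↥(H p X tX ∅) →ₗ[K] ↥(H q Y tY ∅) →ₗ[K] ↥(H (p + q) (X × Y) (prodTop X Y tX tY) ∅)
  cross_nat : ∀ (p q : ℤ) {X Y X' Y' : Type} (tX : TopologicalSpace X)
    (tY : TopologicalSpace Y) (tX' : TopologicalSpace X') (tY' : TopologicalSpace Y')
    (f : X → X') (g : Y → Y') (hf : @Continuous X X' tX tX' f)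
    (hg : @Continuous Y Y' tY tY' g)
    (hfg : @Continuous (X × Y) (X' × Y') (prodTop X Y tX tY) (prodTop X' Y' tX' tY')
      (Prod.map f g)) (a : ↥(H p X tX ∅)) (b : ↥(H q Y tY ∅)),
    map (p + q) (prodTop X Y tX tY) (prodTop X' Y' tX' tY') ∅ ∅ (Prod.map f g) hfg
        (Set.mapsTo_empty _ _) (cross p q tX tY a b)
      = cross p q tX' tY' (map p tX tX' ∅ ∅ f hf (Set.mapsTo_empty _ _) a)
          (map q tY tY' ∅ ∅ g hg (Set.mapsTo_empty _ _) b)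
  /-- Dimension axiom: a one-point space has trivial homology in nonzero degrees. -/
  dim : ∀ (X : Type) (tX : TopologicalSpace X), Subsingleton X →
    ∀ n : ℤ, n ≠ 0 → ∀ a : ↥(H n X tX ∅), a = 0
  /-- For a path-connected space, the degree-zero homology is covered by any point. -/
  zeroSurj : ∀ (X : Type) (tX : TopologicalSpace X), @PathConnectedSpace X tX →
    ∀ x : X, Function.Surjective
      ⇑(map 0 (subTop X tX {x}) tX ∅ ∅ Subtype.val
          (@continuous_subtype_val X tX (· ∈ ({x} : Set X))) (Set.mapsTo_empty _ _))

variable {K : Type} [Field K]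

/-- The relation `↗` on the homology of the pair `(X, A)` of a preordered space `X`
(with preorder `le`): `α ↗ β` iff there are subspaces `E, F ⊆ X` such that `α` comes
from `(E, E ∩ A)`, `β` comes from `(F, F ∩ A)`, and `x ≼ y` for all `x ∈ E`, `y ∈ F`. -/
def upRel (T : HomologyTheory K) {X : Type} (tX : TopologicalSpace X)
    (le : X → X → Prop) (A : Set X) (α β : Σ n, ↥(T.H n X tX A)) : Prop :=
  ∃ E F : Set X,
    α.2 ∈ LinearMap.range (T.map α.1 (subTop X tX E) tX (Subtype.val ⁻¹' A) A
        Subtype.val (@continuous_subtype_val X tX (· ∈ E)) (fun _ hx => hx)) ∧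
    β.2 ∈ LinearMap.range (T.map β.1 (subTop X tX F) tX (Subtype.val ⁻¹' A) A
        Subtype.val (@continuous_subtype_val X tX (· ∈ F)) (fun _ hx => hx)) ∧
    ∀ x ∈ E, ∀ y ∈ F, le x y

/-- Transport of homology classes along an equality of degrees. -/
noncomputable def hcastL (T : HomologyTheory K) {X : Type} {tX : TopologicalSpace X}
    {A : Set X} {n m : ℤ} (h : n = m) : ↥(T.H n X tX A) →ₗ[K] ↥(T.H m X tX A) := by
  subst h; exact LinearMap.id

/-- The total cross product homomorphism
`(H_*(X) ⊗ H_*(Y))_n → H_n(X × Y)` assembled from the cross products. -/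
noncomputable def crossTot (T : HomologyTheory K) {X Y : Type}
    (tX : TopologicalSpace X) (tY : TopologicalSpace Y) (n : ℤ) :
    Hd.TP K (fun p => ↥(T.H p X tX ∅)) (fun q => ↥(T.H q Y tY ∅)) n
      →ₗ[K] ↥(T.H n (X × Y) (prodTop X Y tX tY) ∅) :=
  DirectSum.toModule K _ _ fun p =>
    (hcastL T p.2).comp (TensorProduct.lift (T.cross p.1.1 p.1.2 tX tY))

end Hm

namespace Aux

open Hd

variable (K : Type) [Field K] (V : ℤ → Type) [∀ i, AddCommGroup (V i)] [∀ i, Module K (V i)]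

noncomputable def dse : Hd.TT K V ≃ₗ[K] ⨁ p : ℤ × ℤ, V p.1 ⊗[K] V p.2 :=
  TensorProduct.directSum K K V V

noncomputable def proj (n : ℤ) : Hd.TT K V →ₗ[K] Hd.TT K V :=
  (dse K V).symm.toLinearMap ∘ₗ
    (DirectSum.toModule K (ℤ × ℤ) _ fun p =>
      if p.1 + p.2 = n then DirectSum.lof K (ℤ × ℤ) (fun q : ℤ × ℤ => V q.1 ⊗[K] V q.2) p
      else 0) ∘ₗ
    (dse K V).toLinearMap

lemma proj_tmul (n : ℤ) (x y : Σ i, V i) :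
    proj K V n (emb K V x ⊗ₜ[K] emb K V y) =
      if x.1 + y.1 = n then emb K V x ⊗ₜ[K] emb K V y else 0 := by
  unfold proj dse emb
  simp only [LinearMap.comp_apply, LinearEquiv.coe_coe]
  rw [TensorProduct.directSum_lof_tmul_lof, DirectSum.toModule_lof]
  split_ifs
  · rw [TensorProduct.directSum_symm_lof_tmul]
  · simp

lemma span_emb_tmul :
    Submodule.span K {z : Hd.TT K V | ∃ x y : Σ i, V i, z = emb K V x ⊗ₜ[K] emb K V y} = ⊤ := by
  rw [eq_top_iff]
  rintro z -
  induction z using TensorProduct.induction_on with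
  | zero => exact Submodule.zero_mem _
  | add a b ha hb => exact Submodule.add_mem _ ha hb
  | tmul a b =>
    induction a using DirectSum.induction_on with
    | zero => simp
    | add a a' ha ha' => rw [TensorProduct.add_tmul]; exact Submodule.add_mem _ ha ha'
    | of i v =>
      induction b using DirectSum.induction_on with
      | zero => simp
      | add b b' hb hb' => rw [TensorProduct.tmul_add]; exact Submodule.add_mem _ hb hb'
      | of j w =>
        exact Submodule.subset_span ⟨⟨i, v⟩, ⟨j, w⟩, by simp [emb, DirectSum.lof_eq_of]⟩

lemma proj_mem_homTensor (n : ℤ) (z : Hd.TT K V) : proj K V n z ∈ homTensor K V n := by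
  have hz : z ∈ Submodule.span K
      {z : Hd.TT K V | ∃ x y : Σ i, V i, z = emb K V x ⊗ₜ[K] emb K V y} := by
    rw [span_emb_tmul]; trivial
  induction hz using Submodule.span_induction with
  | mem z hz =>
    obtain ⟨x, y, rfl⟩ := hz
    rw [proj_tmul]
    split_ifs with h
    · exact Submodule.subset_span ⟨x, y, h, rfl⟩
    · exact Submodule.zero_mem _
  | zero => rw [map_zero]; exact Submodule.zero_mem _
  | add a b _ _ ha hb => rw [map_add]; exact Submodule.add_mem _ ha hb
  | smul c a _ ha => rw [map_smul]; exact Submodule.smul_mem _ _ ha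

lemma proj_eq_of_mem (n : ℤ) {z : Hd.TT K V} (hz : z ∈ homTensor K V n) :
    proj K V n z = z := by
  induction hz using Submodule.span_induction with
  | mem z hz => obtain ⟨x, y, h, rfl⟩ := hz; rw [proj_tmul, if_pos h]
  | zero => exact map_zero _
  | add a b _ _ ha hb => rw [map_add, ha, hb]
  | smul c a _ ha => rw [map_smul, ha]

lemma proj_eq_zero_of_mem {n m : ℤ} (hnm : m ≠ n) {z : Hd.TT K V}
    (hz : z ∈ homTensor K V m) : proj K V n z = 0 := by
  induction hz using Submodule.span_induction with
  | mem z hz =>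
    obtain ⟨x, y, h, rfl⟩ := hz
    rw [proj_tmul, if_neg (by rw [h]; exact hnm)]
  | zero => exact map_zero _
  | add a b _ _ ha hb => rw [map_add, ha, hb, add_zero]
  | smul c a _ ha => rw [map_smul, ha, smul_zero]

lemma exists_finset (z : Hd.TT K V) :
    ∃ S : Finset ℤ, (∀ n ∉ S, proj K V n z = 0) ∧ z = ∑ n ∈ S, proj K V n z := by
  have hz : z ∈ Submodule.span K
      {z : Hd.TT K V | ∃ x y : Σ i, V i, z = emb K V x ⊗ₜ[K] emb K V y} := by
    rw [span_emb_tmul]; trivial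
  induction hz using Submodule.span_induction with
  | mem z hz =>
    obtain ⟨x, y, rfl⟩ := hz
    refine ⟨{x.1 + y.1}, fun n hn => ?_, ?_⟩
    · rw [proj_tmul, if_neg (by simpa using fun h => hn (by simp [h]))]
    · rw [Finset.sum_singleton, proj_tmul, if_pos rfl]
  | zero => exact ⟨∅, by simp, by simp⟩
  | add a b _ _ ha hb =>
    obtain ⟨S, hS0, hS⟩ := ha
    obtain ⟨T, hT0, hT⟩ := hb
    refine ⟨S ∪ T, fun n hn => ?_, ?_⟩
    · rw [map_add, hS0 n (fun h => hn (Finset.mem_union_left _ h)),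
        hT0 n (fun h => hn (Finset.mem_union_right _ h)), add_zero]
    · simp only [map_add, Finset.sum_add_distrib]
      rw [← Finset.sum_subset Finset.subset_union_left
            (fun n _ hn => hS0 n hn),
          ← Finset.sum_subset Finset.subset_union_right
            (fun n _ hn => hT0 n hn), ← hS, ← hT]
  | smul c a _ ha =>
    obtain ⟨S, hS0, hS⟩ := ha
    refine ⟨S, fun n hn => by rw [map_smul, hS0 n hn, smul_zero], ?_⟩
    simp only [map_smul]
    rw [← Finset.smul_sum, ← hS]

lemma proj_mem_of_graded {R : Submodule K (Hd.TT K V)} (hR : IsGradedSub K V R)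
    {z : Hd.TT K V} (hz : z ∈ R) (n : ℤ) : proj K V n z ∈ R := by
  have hz' : z ∈ ⨆ m : ℤ, R ⊓ homTensor K V m := hR ▸ hz
  refine Submodule.iSup_induction (motive := fun w => proj K V n w ∈ R) _ hz' ?_ (by simp) ?_
  · intro m w hw
    rcases eq_or_ne m n with rfl | h
    · rw [proj_eq_of_mem K V _ hw.2]; exact hw.1
    · rw [proj_eq_zero_of_mem K V h hw.2]; exact R.zero_mem
  · intro a b ha hb; rw [map_add]; exact R.add_mem ha hb

end Aux

namespace Aux

open Hd

variable (K : Type) [Field K] (V W : ℤ → Type)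
  [∀ i, AddCommGroup (V i)] [∀ i, Module K (V i)]
  [∀ i, AddCommGroup (W i)] [∀ i, Module K (W i)]

noncomputable def dtot (d : ∀ n : ℤ, V n →ₗ[K] W (n - 1)) : Hd.Tot V →ₗ[K] Hd.Tot W :=
  DirectSum.toModule K ℤ _ fun n => (DirectSum.lof K ℤ W (n - 1)).comp (d n)

lemma dtot_emb (d : ∀ n : ℤ, V n →ₗ[K] W (n - 1)) (x : Σ i, V i) :
    dtot K V W d (emb K V x) = emb K W ⟨x.1 - 1, d x.1 x.2⟩ :=
  DirectSum.toModule_lof K x.1 x.2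

noncomputable def Phi2 (d : ∀ n : ℤ, V n →ₗ[K] W (n - 1)) : Hd.TT K V →ₗ[K] Hd.TT K W :=
  TensorProduct.map (dtot K V W d) (dtot K V W d)

lemma Phi2_tmul (d : ∀ n : ℤ, V n →ₗ[K] W (n - 1)) (x y : Σ i, V i) :
    Phi2 K V W d (emb K V x ⊗ₜ[K] emb K V y) =
      emb K W ⟨x.1 - 1, d x.1 x.2⟩ ⊗ₜ[K] emb K W ⟨y.1 - 1, d y.1 y.2⟩ := by
  rw [Phi2, TensorProduct.map_tmul, dtot_emb, dtot_emb]

lemma Phi2_proj (d : ∀ n : ℤ, V n →ₗ[K] W (n - 1)) (n : ℤ) :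
    Phi2 K V W d ∘ₗ proj K V n = proj K W (n - 2) ∘ₗ Phi2 K V W d := by
  refine LinearMap.ext_on (span_emb_tmul K V) ?_
  rintro z ⟨x, y, rfl⟩
  simp only [LinearMap.comp_apply]
  rw [proj_tmul, Phi2_tmul, proj_tmul]
  by_cases h : x.1 + y.1 = n
  · rw [if_pos h, if_pos (show x.1 - 1 + (y.1 - 1) = n - 2 by omega), Phi2_tmul]
  · rw [if_neg h, if_neg (show ¬(x.1 - 1 + (y.1 - 1) = n - 2) by omega), map_zero]

lemma isGradedSub_comap (d : ∀ n : ℤ, V n →ₗ[K] W (n - 1)) {R : Submodule K (Hd.TT K W)}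
    (hR : IsGradedSub K W R) :
    IsGradedSub K V (Submodule.comap (Phi2 K V W d) R) := by
  refine le_antisymm ?_ (iSup_le fun n => inf_le_left)
  intro z hz
  obtain ⟨S, hS0, hSsum⟩ := exists_finset K V z
  rw [hSsum]
  refine Submodule.sum_mem _ fun n _ => ?_
  refine Submodule.mem_iSup_of_mem n ⟨?_, proj_mem_homTensor K V n z⟩
  show Phi2 K V W d (proj K V n z) ∈ R
  have h2 := congrArg (fun f : Hd.TT K V →ₗ[K] Hd.TT K W => f z) (Phi2_proj K V W d n)
  simp only [LinearMap.comp_apply] at h2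
  rw [h2]
  exact proj_mem_of_graded K W hR hz (n - 2)

lemma isBilinear_comap (d : ∀ n : ℤ, V n →ₗ[K] W (n - 1))
    {s : (Σ i, W i) → (Σ i, W i) → Prop} (hs : IsBilinear K W s) :
    IsBilinear K V (fun v w => s ⟨v.1 - 1, d v.1 v.2⟩ ⟨w.1 - 1, d w.1 w.2⟩) := by
  obtain ⟨R, hRg, hRs⟩ := hs
  refine ⟨Submodule.comap (Phi2 K V W d) R, isGradedSub_comap K V W d hRg, fun v w => ?_⟩
  show s ⟨v.1 - 1, d v.1 v.2⟩ ⟨w.1 - 1, d w.1 w.2⟩ ↔ _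
  rw [hRs, Submodule.mem_comap, Phi2_tmul]

lemma gen_map (d : ∀ n : ℤ, V n →ₗ[K] W (n - 1))
    (r : (Σ i, V i) → (Σ i, V i) → Prop) (r' : (Σ i, W i) → (Σ i, W i) → Prop)
    (h1 : ∀ v w, r v w → r' ⟨v.1 - 1, d v.1 v.2⟩ ⟨w.1 - 1, d w.1 w.2⟩)
    {α β : Σ i, V i} (h : gen K V r α β) :
    gen K W r' ⟨α.1 - 1, d α.1 α.2⟩ ⟨β.1 - 1, d β.1 β.2⟩ := by
  intro s hs hrs
  exact h (fun v w => s ⟨v.1 - 1, d v.1 v.2⟩ ⟨w.1 - 1, d w.1 w.2⟩)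
    (isBilinear_comap K V W d hs) (fun a b hab => hrs _ _ (h1 a b hab))

end Aux

lemma deltaRange {K : Type} [Field K] (T : Hm.HomologyTheory K) {X : Type}
    [tX : TopologicalSpace X] (A E : Set X) (n : ℤ) (c : ↥(T.H n X tX A))
    (hc : c ∈ LinearMap.range (T.map n (Hm.subTop X tX E) tX (Subtype.val ⁻¹' A) A
      Subtype.val (@continuous_subtype_val X tX (· ∈ E)) (fun _ hx => hx))) :
    T.delta n tX A c ∈ LinearMap.range (T.map (n - 1)
      (Hm.subTop ↥A (Hm.subTop X tX A) {p : ↥A | (p : X) ∈ E}) (Hm.subTop X tX A)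
      (Subtype.val ⁻¹' (∅ : Set ↥A)) (∅ : Set ↥A) Subtype.val
      (@continuous_subtype_val ↥A (Hm.subTop X tX A) (· ∈ {p : ↥A | (p : X) ∈ E}))
      (fun _ hx => hx)) := by
  obtain ⟨a, ha⟩ := hc
  have hg' : Continuous (fun x : ↥(Subtype.val ⁻¹' A : Set ↥E) =>
      (⟨⟨x.1.1, x.2⟩, x.1.2⟩ : ↥{p : ↥A | (p : X) ∈ E})) :=
    Continuous.subtype_mk (Continuous.subtype_mk
      (continuous_subtype_val.comp continuous_subtype_val) _) _
  have hcont : Continuous ((Subtype.val : ↥{p : ↥A | (p : X) ∈ E} → ↥A) ∘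
      (fun x : ↥(Subtype.val ⁻¹' A : Set ↥E) =>
        (⟨⟨x.1.1, x.2⟩, x.1.2⟩ : ↥{p : ↥A | (p : X) ∈ E}))) :=
    continuous_subtype_val.comp hg'
  have hnat := T.delta_nat n (Hm.subTop X tX E) tX (Subtype.val ⁻¹' A) A Subtype.val
    (@continuous_subtype_val X tX (· ∈ E)) (fun _ hx => hx) hcont
  have h1 : T.delta n tX A c = T.map (n - 1)
      (Hm.subTop ↥E (Hm.subTop X tX E) (Subtype.val ⁻¹' A)) (Hm.subTop X tX A)
      (∅ : Set ↥(Subtype.val ⁻¹' A : Set ↥E)) (∅ : Set ↥A)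
      ((Subtype.val : ↥{p : ↥A | (p : X) ∈ E} → ↥A) ∘
        (fun x : ↥(Subtype.val ⁻¹' A : Set ↥E) =>
          (⟨⟨x.1.1, x.2⟩, x.1.2⟩ : ↥{p : ↥A | (p : X) ∈ E})))
      hcont (Set.mapsTo_empty _ _)
      (T.delta n (Hm.subTop X tX E) (Subtype.val ⁻¹' A) a) := by
    rw [← ha]
    exact LinearMap.congr_fun hnat a
  refine ⟨T.map (n - 1) (Hm.subTop ↥E (Hm.subTop X tX E) (Subtype.val ⁻¹' A))
      (Hm.subTop ↥A (Hm.subTop X tX A) {p : ↥A | (p : X) ∈ E})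
      (∅ : Set ↥(Subtype.val ⁻¹' A : Set ↥E)) (Subtype.val ⁻¹' (∅ : Set ↥A))
      (fun x : ↥(Subtype.val ⁻¹' A : Set ↥E) =>
        (⟨⟨x.1.1, x.2⟩, x.1.2⟩ : ↥{p : ↥A | (p : X) ∈ E}))
      hg' (Set.mapsTo_empty _ _)
      (T.delta n (Hm.subTop X tX E) (Subtype.val ⁻¹' A) a), ?_⟩
  rw [h1]
  exact LinearMap.congr_fun (T.map_comp (n - 1)
    (Hm.subTop ↥E (Hm.subTop X tX E) (Subtype.val ⁻¹' A))
    (Hm.subTop ↥A (Hm.subTop X tX A) {p : ↥A | (p : X) ∈ E}) (Hm.subTop X tX A)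
    (∅ : Set ↥(Subtype.val ⁻¹' A : Set ↥E)) (Subtype.val ⁻¹' (∅ : Set ↥A)) (∅ : Set ↥A)
    (fun x : ↥(Subtype.val ⁻¹' A : Set ↥E) =>
      (⟨⟨x.1.1, x.2⟩, x.1.2⟩ : ↥{p : ↥A | (p : X) ∈ E}))
    Subtype.val hg'
    (@continuous_subtype_val ↥A (Hm.subTop X tX A) (· ∈ {p : ↥A | (p : X) ∈ E}))
    (Set.mapsTo_empty _ _) (fun _ hx => hx))
    (T.delta n (Hm.subTop X tX E) (Subtype.val ⁻¹' A) a)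

theorem stmt13 {K : Type} [Field K] (T : Hm.HomologyTheory K)
    {X : Type} [tX : TopologicalSpace X] [Preorder X] (A : Set X) :
    (∀ α β : Σ n, ↥(T.H n X tX A), Hm.upRel T tX (· ≤ ·) A α β →
      Hm.upRel T (Hm.subTop X tX A) (fun a b => (a : X) ≤ (b : X)) (∅ : Set ↥A)
        ⟨α.1 - 1, T.delta α.1 tX A α.2⟩ ⟨β.1 - 1, T.delta β.1 tX A β.2⟩) ∧
    (∀ α β : Σ n, ↥(T.H n X tX A),
      Hd.gen K (fun n => ↥(T.H n X tX A)) (Hm.upRel T tX (· ≤ ·) A) α β →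
      Hd.gen K (fun n => ↥(T.H n ↥A (Hm.subTop X tX A) (∅ : Set ↥A)))
        (Hm.upRel T (Hm.subTop X tX A) (fun a b => (a : X) ≤ (b : X)) (∅ : Set ↥A))
        ⟨α.1 - 1, T.delta α.1 tX A α.2⟩ ⟨β.1 - 1, T.delta β.1 tX A β.2⟩) := by
  have part1 : ∀ α β : Σ n, ↥(T.H n X tX A), Hm.upRel T tX (· ≤ ·) A α β →
      Hm.upRel T (Hm.subTop X tX A) (fun a b => (a : X) ≤ (b : X)) (∅ : Set ↥A)
        ⟨α.1 - 1, T.delta α.1 tX A α.2⟩ ⟨β.1 - 1, T.delta β.1 tX A β.2⟩ := by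
    rintro α β ⟨E, F, hE, hF, hEF⟩
    exact ⟨{p : ↥A | (p : X) ∈ E}, {p : ↥A | (p : X) ∈ F},
      deltaRange T A E α.1 α.2 hE, deltaRange T A F β.1 β.2 hF,
      fun x hx y hy => hEF x hx y hy⟩
  refine ⟨part1, fun α β h => ?_⟩
  exact Aux.gen_map K (fun n => ↥(T.H n X tX A))
    (fun n => ↥(T.H n ↥A (Hm.subTop X tX A) (∅ : Set ↥A)))
    (fun n => T.delta n tX A) _ _ (fun v w hvw => part1 v w hvw) h
end
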